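/- Let z be a smooth solution of the short pulse equation z_{xt} = z + (1/6)(z³)_{xx} with z_x ≠ 0 and λ ≠ 0, and let ω₁ = λ z_x dx + (λ/2) z_x z² dt, ω₂ = λ dx + ((λ/2)z² + 1/λ) dt, ω₃ = z dt. Define ω₁₃ = (−2/z_x) ω₁ + ω₂ and ω₂₃ = ω₁, i.e., a = −2/z_x, b = 1, c = 0. Then ac − b² = −1, dω₁₃ = ω₃ ∧ ω₂₃, and dω₂₃ = −ω₃ ∧ ω₁₃; in particular the mean curvature of the associated immersion is H = (a+c)/2 = −1/z_x, which depends on the first-order jet of the solution z. -/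

import Mathlib

noncomputable def pdx (f : ℝ → ℝ → ℝ) (x t : ℝ) : ℝ := deriv (fun u => f u t) x
noncomputable def pdt (f : ℝ → ℝ → ℝ) (x t : ℝ) : ℝ := deriv (fun s => f x s) t


lemma hasDerivAt_fst (f : ℝ → ℝ → ℝ) (hf : ContDiff ℝ (⊤ : ℕ∞) (fun p : ℝ × ℝ => f p.1 p.2))
    (x t : ℝ) :
    HasDerivAt (fun u => f u t) (fderiv ℝ (fun p : ℝ × ℝ => f p.1 p.2) (x, t) (1, 0)) x := by
  have h1 : HasDerivAt (fun u : ℝ => (u, t)) ((1 : ℝ), (0 : ℝ)) x :=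
    (hasDerivAt_id x).prodMk (hasDerivAt_const x t)
  have h2 := (hf.differentiable (by simp) (x, t)).hasFDerivAt
  exact h2.comp_hasDerivAt x h1

lemma hasDerivAt_snd (f : ℝ → ℝ → ℝ) (hf : ContDiff ℝ (⊤ : ℕ∞) (fun p : ℝ × ℝ => f p.1 p.2))
    (x t : ℝ) :
    HasDerivAt (fun s => f x s) (fderiv ℝ (fun p : ℝ × ℝ => f p.1 p.2) (x, t) (0, 1)) t := by
  have h1 : HasDerivAt (fun s : ℝ => (x, s)) ((0 : ℝ), (1 : ℝ)) t :=
    (hasDerivAt_const t x).prodMk (hasDerivAt_id t)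
  have h2 := (hf.differentiable (by simp) (x, t)).hasFDerivAt
  exact h2.comp_hasDerivAt t h1

lemma hasDerivAt_pdx (f : ℝ → ℝ → ℝ) (hf : ContDiff ℝ (⊤ : ℕ∞) (fun p : ℝ × ℝ => f p.1 p.2))
    (x t : ℝ) : HasDerivAt (fun u => f u t) (pdx f x t) x :=
  (hasDerivAt_fst f hf x t).differentiableAt.hasDerivAt

lemma hasDerivAt_pdt (f : ℝ → ℝ → ℝ) (hf : ContDiff ℝ (⊤ : ℕ∞) (fun p : ℝ × ℝ => f p.1 p.2))
    (x t : ℝ) : HasDerivAt (fun s => f x s) (pdt f x t) t :=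
  (hasDerivAt_snd f hf x t).differentiableAt.hasDerivAt

lemma contDiff_pdx (f : ℝ → ℝ → ℝ) (hf : ContDiff ℝ (⊤ : ℕ∞) (fun p : ℝ × ℝ => f p.1 p.2)) :
    ContDiff ℝ (⊤ : ℕ∞) (fun p : ℝ × ℝ => pdx f p.1 p.2) := by
  have h := hf.fderiv_right (m := (⊤ : ℕ∞)) (by simp)
  have h2 : ContDiff ℝ (⊤ : ℕ∞)
      (fun p : ℝ × ℝ => fderiv ℝ (fun p : ℝ × ℝ => f p.1 p.2) p ((1 : ℝ), (0 : ℝ))) :=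
    h.clm_apply contDiff_const
  have e : (fun p : ℝ × ℝ => pdx f p.1 p.2)
      = fun p : ℝ × ℝ => fderiv ℝ (fun p : ℝ × ℝ => f p.1 p.2) p ((1 : ℝ), (0 : ℝ)) := by
    funext p
    exact (hasDerivAt_fst f hf p.1 p.2).deriv
  rw [e]; exact h2

/-- For a smooth solution `z` of the short pulse equation with `z_x ≠ 0`, `λ ≠ 0`,
setting `a = −2/z_x`, `b = 1`, `c = 0`, `ω₁₃ = a ω₁ + ω₂`, `ω₂₃ = ω₁`
(with `ω₁ = λ z_x dx + (λ/2) z_x z² dt`, `ω₂ = λ dx + ((λ/2)z² + 1/λ) dt`,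
`ω₃ = z dt`), one has `ac − b² = −1`, `dω₁₃ = ω₃ ∧ ω₂₃`, `dω₂₃ = −ω₃ ∧ ω₁₃`;
in particular the mean curvature is `H = (a+c)/2 = −1/z_x`, depending on the
first-order jet of `z`. -/
theorem shortPulse_isometric_immersion
    (z : ℝ → ℝ → ℝ) (hz : ContDiff ℝ (⊤ : ℕ∞) (fun p : ℝ × ℝ => z p.1 p.2))
    (lam : ℝ) (hlam : lam ≠ 0)
    (hzx : ∀ x t, pdx z x t ≠ 0)
    (hSP : ∀ x t, pdt (pdx z) x t =
      z x t + (1/6) * pdx (pdx (fun a b => (z a b) ^ 3)) x t) :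
    ∀ x t : ℝ,
      -- ac − b² = −1 with a = −2/z_x, b = 1, c = 0
      (-2 / pdx z x t) * 0 - (1 : ℝ) ^ 2 = -1 ∧
      -- dω₁₃ = ω₃ ∧ ω₂₃ :  ω₁₃ = (−2/z_x) ω₁ + ω₂, ω₂₃ = ω₁
      pdx (fun a b => (-2 / pdx z a b) * ((lam/2) * pdx z a b * (z a b) ^ 2)
            + ((lam/2) * (z a b) ^ 2 + 1/lam)) x t
        - pdt (fun a b => (-2 / pdx z a b) * (lam * pdx z a b) + lam) x t
        = 0 * ((lam/2) * pdx z x t * (z x t) ^ 2) - z x t * (lam * pdx z x t) ∧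
      -- dω₂₃ = −ω₃ ∧ ω₁₃
      pdx (fun a b => (lam/2) * pdx z a b * (z a b) ^ 2) x t
        - pdt (fun a b => lam * pdx z a b) x t
        = -(0 * ((-2 / pdx z x t) * ((lam/2) * pdx z x t * (z x t) ^ 2)
                  + ((lam/2) * (z x t) ^ 2 + 1/lam))
            - z x t * ((-2 / pdx z x t) * (lam * pdx z x t) + lam)) ∧
      -- mean curvature H = (a + c)/2 = −1/z_x
      ((-2 / pdx z x t) + 0) / 2 = -1 / pdx z x t := by
  have hP : ContDiff ℝ (⊤ : ℕ∞) (fun p : ℝ × ℝ => pdx z p.1 p.2) := contDiff_pdx z hz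
  have hzD : ∀ x t, HasDerivAt (fun u => z u t) (pdx z x t) x := hasDerivAt_pdx z hz
  have hPx : ∀ x t, HasDerivAt (fun u => pdx z u t) (pdx (pdx z) x t) x :=
    hasDerivAt_pdx _ hP
  have hPt : ∀ x t, HasDerivAt (fun s => pdx z x s) (pdt (pdx z) x t) t :=
    hasDerivAt_pdt _ hP
  -- first derivative of the cube
  have hcube1 : ∀ x t, pdx (fun a b => (z a b) ^ 3) x t = 3 * z x t ^ 2 * pdx z x t := by
    intro x t
    have h : HasDerivAt (fun u => (z u t) ^ 3) (3 * z x t ^ 2 * pdx z x t) x := by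
      simpa using (hzD x t).fun_pow 3
    exact h.deriv
  -- second derivative of the cube
  have hcube2 : ∀ x t, pdx (pdx (fun a b => (z a b) ^ 3)) x t
      = 6 * z x t * (pdx z x t) ^ 2 + 3 * z x t ^ 2 * pdx (pdx z) x t := by
    intro x t
    have e : pdx (fun a b => (z a b) ^ 3) = fun a b => 3 * z a b ^ 2 * pdx z a b := by
      funext a b; exact hcube1 a b
    rw [e]
    have h : HasDerivAt (fun u => 3 * z u t ^ 2 * pdx z u t)
        ((3 * (2 * z x t * pdx z x t)) * pdx z x t + 3 * z x t ^ 2 * pdx (pdx z) x t) x := by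
      have h1 : HasDerivAt (fun u => 3 * z u t ^ 2) (3 * (2 * z x t * pdx z x t)) x := by
        simpa [mul_comm, mul_assoc, mul_left_comm] using ((hzD x t).pow 2).const_mul 3
      exact h1.mul (hPx x t)
    have hd : pdx (fun a b => 3 * z a b ^ 2 * pdx z a b) x t
        = (3 * (2 * z x t * pdx z x t)) * pdx z x t + 3 * z x t ^ 2 * pdx (pdx z) x t :=
      h.deriv
    rw [hd]; ring
  intro x t
  refine ⟨by norm_num, ?_, ?_, by field_simp [hzx x t]; ring⟩
  · -- dω₁₃ equation
    have e1 : (fun a b => (-2 / pdx z a b) * ((lam/2) * pdx z a b * (z a b) ^ 2)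
          + ((lam/2) * (z a b) ^ 2 + 1/lam))
        = fun a b => -(lam/2) * (z a b) ^ 2 + 1/lam := by
      funext a b
      field_simp [hzx a b]
      ring
    have e2 : (fun a b => (-2 / pdx z a b) * (lam * pdx z a b) + lam)
        = fun _ _ => -lam := by
      funext a b
      field_simp [hzx a b]
      ring
    rw [e1, e2]
    have h1 : pdx (fun a b => -(lam/2) * (z a b) ^ 2 + 1/lam) x t
        = -(lam/2) * (2 * z x t * pdx z x t) := by
      have h : HasDerivAt (fun u => -(lam/2) * (z u t) ^ 2 + 1/lam)
          (-(lam/2) * (2 * z x t * pdx z x t)) x := by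
        simpa [mul_comm, mul_assoc, mul_left_comm] using
          (((hzD x t).pow 2).const_mul (-(lam/2))).add_const (1/lam)
      exact h.deriv
    have h2 : pdt (fun _ _ : ℝ => -lam) x t = 0 := by
      simp [pdt]
    rw [h1, h2]; ring
  · -- dω₂₃ equation
    have h1 : pdx (fun a b => (lam/2) * pdx z a b * (z a b) ^ 2) x t
        = (lam/2) * pdx (pdx z) x t * (z x t) ^ 2
          + (lam/2) * pdx z x t * (2 * z x t * pdx z x t) := by
      have h : HasDerivAt (fun u => (lam/2) * pdx z u t * (z u t) ^ 2)
          ((lam/2) * pdx (pdx z) x t * (z x t) ^ 2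
            + (lam/2) * pdx z x t * (2 * z x t * pdx z x t)) x := by
        have ha : HasDerivAt (fun u => (lam/2) * pdx z u t) ((lam/2) * pdx (pdx z) x t) x :=
          (hPx x t).const_mul _
        have hb : HasDerivAt (fun u => (z u t) ^ 2) (2 * z x t * pdx z x t) x := by
          simpa using (hzD x t).fun_pow 2
        simpa [mul_comm, mul_assoc, mul_left_comm] using ha.fun_mul hb
      exact h.deriv
    have h2 : pdt (fun a b => lam * pdx z a b) x t = lam * pdt (pdx z) x t := by
      have h : HasDerivAt (fun s => lam * pdx z x s) (lam * pdt (pdx z) x t) t :=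
        (hPt x t).const_mul _
      exact h.deriv
    rw [h1, h2, hSP x t, hcube2 x t]
    field_simp [hzx x t]
    ring
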